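/- arXiv:1410.1471 — 5 statements merged into one kernel-verified Lean document; each statement's English description precedes it below -/
import Mathlib

section
/- Let k be a field, L a finite-dimensional Lie algebra over k, H a nilpotent Lie subalgebra of L, and B a symmetric bilinear form on L that is invariant, i.e. B([x,y],z) = B(x,[y,z]) for all x,y,z ∈ L. If α, β : H → k are two functions with α + β ≠ 0 (as a function on H), then the generalized weight spaces L_α and L_β of the adjoint action of H on L are orthogonal with respect to B, i.e. B(u,v) = 0 for all u ∈ L_α and v ∈ L_β. In particular, when H is a Cartan subalgebra, every root space L_α (α ≠ 0) is B-orthogonal to the zero weight space (hence to H) and to every root space L_β with β ≠ −α. -/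
/-! Invariance makes every `ad z` skew for `B`, so it suffices to treat one skew endomorphism
`T`. There `B ((T - a) u) v + B u ((T - b) v) = -(a + b) B u v`, and by induction on the exponents
killing `u` and `v` both terms on the left vanish; pick `z` with `α z + β z ≠ 0`. -/

namespace LinearMap.BilinForm

variable {R M : Type*} [CommRing R] [NoZeroDivisors R] [AddCommGroup M] [Module R M]

theorem apply_eq_zero_of_mem_maxGenEigenspace_of_add_ne_zero {B : LinearMap.BilinForm R M}
    {T : Module.End R M} (hT : B.IsAdjointPair B T (-T)) {a b : R} (hab : a + b ≠ 0) {u v : M}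
    (hu : u ∈ T.maxGenEigenspace a) (hv : v ∈ T.maxGenEigenspace b) : B u v = 0 := by
  have key : ∀ x y, B ((T - a • 1) x) y + B x ((T - b • 1) y) = -(a + b) * B x y := by
    intro x y
    simp only [LinearMap.sub_apply, LinearMap.smul_apply, Module.End.one_apply, map_sub,
      map_smul, hT x y, Pi.neg_apply, map_neg, smul_eq_mul]
    ring
  obtain ⟨p, hp⟩ := (Module.End.mem_maxGenEigenspace _ _ _).mp hu
  obtain ⟨q, hq⟩ := (Module.End.mem_maxGenEigenspace _ _ _).mp hv
  clear hu hv
  induction p generalizing u q v with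
  | zero => simp_all
  | succ p ihp =>
    induction q generalizing v with
    | zero => simp_all
    | succ q ihq =>
      have hu' : B ((T - a • 1) u) v = 0 :=
        ihp (by rwa [← Module.End.mul_apply, ← pow_succ]) (q + 1) hq
      have hv' : B u ((T - b • 1) v) = 0 :=
        ihq (by rwa [← Module.End.mul_apply, ← pow_succ])
      have := key u v
      rw [hu', hv', add_zero, eq_comm, mul_eq_zero] at this
      exact this.resolve_left (neg_ne_zero.mpr hab)

end LinearMap.BilinForm

namespace LieModule

variable {R L M : Type*} [CommRing R] [NoZeroDivisors R] [LieRing L] [LieAlgebra R L]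
  [LieRing.IsNilpotent L] [AddCommGroup M] [Module R M] [LieRingModule L M] [LieModule R L M]

theorem apply_eq_zero_of_mem_genWeightSpace_of_add_ne_zero {Φ : LinearMap.BilinForm R M}
    (hΦ : Φ.lieInvariant L) {χ₁ χ₂ : L → R} (hχ : χ₁ + χ₂ ≠ 0) {u v : M}
    (hu : u ∈ genWeightSpace M χ₁) (hv : v ∈ genWeightSpace M χ₂) : Φ u v = 0 := by
  obtain ⟨x, hx⟩ := Function.ne_iff.mp hχ
  exact LinearMap.BilinForm.apply_eq_zero_of_mem_maxGenEigenspace_of_add_ne_zero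
    (T := toEnd R L M x) (fun y z ↦ by simpa using hΦ x y z) hx
    (genWeightSpace_le_genWeightSpaceOf M x χ₁ hu) (genWeightSpace_le_genWeightSpaceOf M x χ₂ hv)

end LieModule

theorem genWeightSpace_orthogonal_of_invariant_form_general
    (k : Type*) [Field k] (L : Type*) [LieRing L] [LieAlgebra k L]
    (H : LieSubalgebra k L) [LieRing.IsNilpotent H]
    (B : LinearMap.BilinForm k L)
    (hBinv : ∀ x y z : L, B ⁅x, y⁆ z = B x ⁅y, z⁆)
    (α β : H → k) (hαβ : α + β ≠ 0)
    (u v : L)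
    (hu : u ∈ LieAlgebra.rootSpace H α)
    (hv : v ∈ LieAlgebra.rootSpace H β) :
    B u v = 0 := by
  have hB : B.lieInvariant H := fun x y z ↦ by
    rw [LieSubalgebra.coe_bracket_of_module, LieSubalgebra.coe_bracket_of_module, ← hBinv,
      ← lie_skew, map_neg, LinearMap.neg_apply]
  exact LieModule.apply_eq_zero_of_mem_genWeightSpace_of_add_ne_zero hB hαβ hu hv

/-- **Orthogonality of generalized weight spaces with respect to an invariant form.**
Let `k` be a field, `L` a finite-dimensional Lie algebra over `k`, `H` a nilpotent Lie
subalgebra of `L`, and `B` an invariant symmetric bilinear form on `L`.  If `α, β : H → k`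
satisfy `α + β ≠ 0`, then the generalized weight spaces (root spaces) `L_α` and `L_β` of the
adjoint action of `H` on `L` are orthogonal with respect to `B`. -/
theorem genWeightSpace_orthogonal_of_invariant_form
    (k : Type*) [Field k] (L : Type*) [LieRing L] [LieAlgebra k L]
    [FiniteDimensional k L]
    (H : LieSubalgebra k L) [LieRing.IsNilpotent H]
    (B : LinearMap.BilinForm k L)
    (hBsymm : ∀ x y : L, B x y = B y x)
    (hBinv : ∀ x y z : L, B ⁅x, y⁆ z = B x ⁅y, z⁆)
    (α β : H → k) (hαβ : α + β ≠ 0)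
    (u v : L)
    (hu : u ∈ LieAlgebra.rootSpace H α)
    (hv : v ∈ LieAlgebra.rootSpace H β) :
    B u v = 0 :=
  genWeightSpace_orthogonal_of_invariant_form_general k L H B hBinv α β hαβ u v hu hv
end

section
/- Let r, s be nonnegative integers and let ζ, η be partitions of the same integer n such that ζ_i = η_i for all i ≤ r and ζ'_j = η'_j for all j ≤ s. Define the erased partitions ζ̂ and η̂ by ζ̂_i = max(ζ_{r+i} − s, 0) and η̂_i = max(η_{r+i} − s, 0). Then ζ̂ and η̂ are partitions of the same integer n̂, and ζ ⊴ η holds in the dominance order if and only if ζ̂ ⊴ η̂ holds in the dominance order. -/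
/-- A function `f : ℕ → ℕ` (recording the parts `f 0 ≥ f 1 ≥ ⋯`, i.e. `f i` is the
`(i+1)`-st part) is a partition of `n` if it is weakly decreasing, has finite support,
and its parts sum to `n`. -/
def IsPartitionOf (n : ℕ) (f : ℕ → ℕ) : Prop :=
  Antitone f ∧ (Function.support f).Finite ∧ ∑ᶠ i, f i = n

/-- The dominance order on partitions: `DomLE g f` means `g ⊴ f`, i.e. every partial sum
of `g` is at most the corresponding partial sum of `f`. -/
def DomLE (g f : ℕ → ℕ) : Prop :=
  ∀ k : ℕ, ∑ i ∈ Finset.range k, g i ≤ ∑ i ∈ Finset.range k, f i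

/-- The transpose (conjugate) partition: its `(j+1)`-st part is `#{i : λ_i ≥ j+1}`. -/
noncomputable def conjPart (f : ℕ → ℕ) : ℕ → ℕ :=
  fun j => Set.ncard {i : ℕ | j < f i}

/-- Erasing the first `r` rows and first `s` columns of a partition: the `(i+1)`-st part of
the erased partition is `max (λ_{r+i} − s) 0` (here `ℕ`-subtraction is truncated). -/
def erasePart (r s : ℕ) (f : ℕ → ℕ) : ℕ → ℕ :=
  fun i => f (r + i) - s

lemma conj_lt_iff {f : ℕ → ℕ} (hf : Antitone f) (hsupp : (Function.support f).Finite)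
    (i j : ℕ) : i < conjPart f j ↔ j < f i := by
  have hS : {i' : ℕ | j < f i'}.Finite :=
    hsupp.subset (fun x hx => by
      simp only [Set.mem_setOf_eq] at hx
      simp only [Function.mem_support]; omega)
  constructor
  · intro h
    by_contra hc
    push_neg at hc
    have hsub : {i' : ℕ | j < f i'} ⊆ Set.Iio i := by
      intro x hx
      by_contra hx'
      simp only [Set.mem_Iio, not_lt] at hx'
      have h1 : j < f x := hx.out
      have h2 : f x ≤ f i := hf hx'
      omega
    have := Set.ncard_le_ncard hsub (Set.finite_Iio i)
    rw [show Set.Iio i = ↑(Finset.range i) from (Finset.coe_range i).symm,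
      Set.ncard_coe_finset, Finset.card_range] at this
    unfold conjPart at h; omega
  · intro h
    have hsub : Set.Iio (i + 1) ⊆ {i' : ℕ | j < f i'} := by
      intro x hx
      have h2 : f i ≤ f x := hf (Nat.lt_succ_iff.mp hx)
      have : j < f x := lt_of_lt_of_le h h2
      exact this
    have := Set.ncard_le_ncard hsub hS
    rw [show Set.Iio (i + 1) = ↑(Finset.range (i + 1)) from (Finset.coe_range _).symm,
      Set.ncard_coe_finset, Finset.card_range] at this
    unfold conjPart; omega

lemma sum_ite_min (a b : ℕ) :
    ∑ j ∈ Finset.range b, (if j < a then (1 : ℕ) else 0) = min a b := by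
  classical
  have hfil : (Finset.range b).filter (fun j => j < a) = Finset.range (min a b) := by
    ext j; simp only [Finset.mem_filter, Finset.mem_range]; omega
  calc ∑ j ∈ Finset.range b, (if j < a then (1 : ℕ) else 0)
      = ((Finset.range b).filter (fun j => j < a)).card := (Finset.card_filter _ _).symm
    _ = (Finset.range (min a b)).card := by rw [hfil]
    _ = min a b := Finset.card_range _

lemma sum_min_eq {f : ℕ → ℕ} (hf : Antitone f) (hsupp : (Function.support f).Finite)
    (s k : ℕ) :
    ∑ i ∈ Finset.range k, min (f i) s = ∑ j ∈ Finset.range s, min (conjPart f j) k := by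
  classical
  calc ∑ i ∈ Finset.range k, min (f i) s
      = ∑ i ∈ Finset.range k, ∑ j ∈ Finset.range s, (if j < f i then (1 : ℕ) else 0) := by
        exact Finset.sum_congr rfl fun i _ => (sum_ite_min (f i) s).symm
    _ = ∑ j ∈ Finset.range s, ∑ i ∈ Finset.range k, (if j < f i then (1 : ℕ) else 0) :=
        Finset.sum_comm
    _ = ∑ j ∈ Finset.range s, ∑ i ∈ Finset.range k, (if i < conjPart f j then (1 : ℕ) else 0) := by
        refine Finset.sum_congr rfl fun j _ => Finset.sum_congr rfl fun i _ => ?_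
        exact if_congr (conj_lt_iff hf hsupp i j).symm rfl rfl
    _ = ∑ j ∈ Finset.range s, min (conjPart f j) k :=
        Finset.sum_congr rfl fun j _ => sum_ite_min (conjPart f j) k

lemma sum_split {f : ℕ → ℕ} (hf : Antitone f) (hsupp : (Function.support f).Finite)
    (r s k : ℕ) :
    ∑ i ∈ Finset.range (r + k), f i + ∑ j ∈ Finset.range s, min (conjPart f j) r
    = ∑ i ∈ Finset.range r, f i + ∑ j ∈ Finset.range s, min (conjPart f j) (r + k)
      + ∑ i ∈ Finset.range k, (f (r + i) - s) := by
  have h1 : ∑ i ∈ Finset.range (r + k), f i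
      = ∑ i ∈ Finset.range r, f i + ∑ i ∈ Finset.range k, f (r + i) :=
    Finset.sum_range_add f r k
  have h2 : ∑ i ∈ Finset.range k, f (r + i)
      = ∑ i ∈ Finset.range k, min (f (r + i)) s + ∑ i ∈ Finset.range k, (f (r + i) - s) := by
    rw [← Finset.sum_add_distrib]
    exact Finset.sum_congr rfl fun i _ => by omega
  have h3 : ∑ i ∈ Finset.range (r + k), min (f i) s
      = ∑ i ∈ Finset.range r, min (f i) s + ∑ i ∈ Finset.range k, min (f (r + i)) s :=
    Finset.sum_range_add (fun i => min (f i) s) r k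
  have h4 := sum_min_eq hf hsupp s (r + k)
  have h5 := sum_min_eq hf hsupp s r
  omega

/-- **Row and column removal and the dominance order.**
If `ζ` and `η` are partitions of the same integer `n` having the same first `r` rows and the
same first `s` columns, then the partitions `ζ̂` and `η̂` obtained by erasing these rows and
columns are partitions of one and the same integer `n̂`, and `ζ ⊴ η` holds if and only if
`ζ̂ ⊴ η̂` holds. -/
theorem erase_rows_cols_dominance
    (n r s : ℕ) (zeta eta : ℕ → ℕ)
    (hz : IsPartitionOf n zeta) (he : IsPartitionOf n eta)
    (hrows : ∀ i < r, zeta i = eta i)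
    (hcols : ∀ j < s, conjPart zeta j = conjPart eta j) :
    (∃ m : ℕ, IsPartitionOf m (erasePart r s zeta) ∧ IsPartitionOf m (erasePart r s eta)) ∧
    (DomLE zeta eta ↔ DomLE (erasePart r s zeta) (erasePart r s eta)) := by
  obtain ⟨hza, hzf, hzs⟩ := hz
  obtain ⟨hea, hef, hes⟩ := he
  -- a common bound on the supports
  obtain ⟨N, hN⟩ : ∃ N, ∀ i, N ≤ i → zeta i = 0 ∧ eta i = 0 := by
    obtain ⟨a, ha⟩ := hzf.bddAbove
    obtain ⟨b, hb⟩ := hef.bddAbove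
    refine ⟨max a b + 1, fun i hi => ⟨?_, ?_⟩⟩
    · by_contra h
      have := ha (Function.mem_support.mpr h); omega
    · by_contra h
      have := hb (Function.mem_support.mpr h); omega
  have hBr : ∀ t, ∑ j ∈ Finset.range s, min (conjPart zeta j) t
      = ∑ j ∈ Finset.range s, min (conjPart eta j) t :=
    fun t => Finset.sum_congr rfl fun j hj => by rw [hcols j (Finset.mem_range.mp hj)]
  have hA : ∀ k ≤ r, ∑ i ∈ Finset.range k, zeta i = ∑ i ∈ Finset.range k, eta i :=
    fun k hk => Finset.sum_congr rfl fun i hi =>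
      hrows i (lt_of_lt_of_le (Finset.mem_range.mp hi) hk)
  have key : ∀ k, ∑ i ∈ Finset.range (r + k), zeta i
        + ∑ i ∈ Finset.range k, (eta (r + i) - s)
      = ∑ i ∈ Finset.range (r + k), eta i + ∑ i ∈ Finset.range k, (zeta (r + i) - s) := by
    intro k
    have h1 := sum_split hza hzf r s k
    have h2 := sum_split hea hef r s k
    have h3 := hBr r
    have h4 := hBr (r + k)
    have h5 := hA r le_rfl
    omega
  -- sums up to r + N equal n
  have hzn : ∑ i ∈ Finset.range (r + N), zeta i = n := by
    rw [← hzs]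
    exact (finsum_eq_sum_of_support_subset zeta (fun x hx => by
      simp only [Finset.coe_range, Set.mem_Iio]
      by_contra hc
      exact hx ((hN x (by omega)).1))).symm
  have hen : ∑ i ∈ Finset.range (r + N), eta i = n := by
    rw [← hes]
    exact (finsum_eq_sum_of_support_subset eta (fun x hx => by
      simp only [Finset.coe_range, Set.mem_Iio]
      by_contra hc
      exact hx ((hN x (by omega)).2))).symm
  have hsum_erase_z : ∑ᶠ i, erasePart r s zeta i = ∑ i ∈ Finset.range N, (zeta (r + i) - s) :=
    finsum_eq_sum_of_support_subset _ (fun x hx => by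
      simp only [Finset.coe_range, Set.mem_Iio]
      by_contra hc
      have : zeta (r + x) = 0 := (hN (r + x) (by omega)).1
      exact hx (by simp [erasePart, this])
      )
  have hsum_erase_e : ∑ᶠ i, erasePart r s eta i = ∑ i ∈ Finset.range N, (eta (r + i) - s) :=
    finsum_eq_sum_of_support_subset _ (fun x hx => by
      simp only [Finset.coe_range, Set.mem_Iio]
      by_contra hc
      have : eta (r + x) = 0 := (hN (r + x) (by omega)).2
      exact hx (by simp [erasePart, this])
      )
  constructor
  · refine ⟨∑ i ∈ Finset.range N, (zeta (r + i) - s), ⟨?_, ?_, hsum_erase_z⟩, ⟨?_, ?_, ?_⟩⟩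
    · exact fun i j hij => Nat.sub_le_sub_right (hza (by omega)) s
    · exact (Set.finite_Iio N).subset (fun x hx => by
        by_contra hc
        simp only [Set.mem_Iio, not_lt] at hc
        have : zeta (r + x) = 0 := (hN (r + x) (by omega)).1
        exact hx (by simp [erasePart, this]))
    · exact fun i j hij => Nat.sub_le_sub_right (hea (by omega)) s
    · exact (Set.finite_Iio N).subset (fun x hx => by
        by_contra hc
        simp only [Set.mem_Iio, not_lt] at hc
        have : eta (r + x) = 0 := (hN (r + x) (by omega)).2
        exact hx (by simp [erasePart, this]))
    · have hk := key N
      rw [hzn, hen] at hk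
      rw [hsum_erase_e]
      omega
  · constructor
    · intro h k
      have hk := key k
      have h2 := h (r + k)
      simp only [erasePart]
      omega
    · intro h k
      by_cases hkr : k ≤ r
      · exact le_of_eq (hA k hkr)
      · have hk : r + (k - r) = k := by omega
        have h1 := key (k - r)
        rw [hk] at h1
        have h2 := h (k - r)
        simp only [erasePart] at h2
        omega
end

section
/- Fix a positive integer n and let 𝒫 denote the set of partitions of n, with dominance order ⊴ and transposition λ ↦ λ'. Let R ⊆ 𝒫 be any subset, Ψ : R → 𝒫 a function, and d : 𝒫 × R → ℕ, e : 𝒫 × 𝒫 → ℕ functions satisfying: (i) e(ν,ν) = 1 for all ν ∈ 𝒫; (ii) e(ν,ζ) ≠ 0 implies ζ ⊴ ν; (iii) d(μ,μ) = 1 for all μ ∈ R; (iv) d(λ,μ) ≠ 0 implies λ ⊴ μ; (v) d(λ,μ) = e(λ', Ψ(μ)) for all λ ∈ 𝒫 and μ ∈ R. Then Ψ(μ) = μ' for every μ ∈ R. (This is the combinatorial core of the theorem that the modular Springer correspondence for GL_n sends the simple module D^μ, for μ an ℓ-regular partition, to the nilpotent orbit of Jordan type μ': take d to be the ℓ-modular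 decomposition matrix of the symmetric group S_n, e the decomposition matrix for GL_n-equivariant perverse sheaves on the nilpotent cone, and Ψ the modular Springer correspondence.) -/
/-!
From `d(μ, μ) = 1 = e(μ', Ψ μ)` we get `Ψ μ ⊴ μ'`, and from `e(Ψ μ, Ψ μ) = 1 = d((Ψ μ)', μ)`
we get `(Ψ μ)' ⊴ μ`. Transposition reverses dominance, since
`∑_{j<k} λ'_j = ∑_i min(λ_i, k) = n - ∑_i (λ_i - k)⁺` and the excess `∑_i (λ_i - k)⁺` grows
with `λ` in the dominance order. Hence also `μ' ⊴ Ψ μ`, and antisymmetry gives `Ψ μ = μ'`.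
-/

open Finset

section Conjugate

variable {f : ℕ → ℕ}

lemma exists_forall_ge_eq_zero (hfin : (Function.support f).Finite) :
    ∃ N, ∀ i, N ≤ i → f i = 0 := by
  obtain ⟨B, hB⟩ := hfin.bddAbove
  exact ⟨B + 1, fun i hi => by_contra fun hfi => by have := hB hfi; omega⟩

lemma setOf_lt_finite (hfin : (Function.support f).Finite) (j : ℕ) :
    {i | j < f i}.Finite :=
  hfin.subset fun _ hi => Nat.ne_zero_of_lt hi

lemma lt_conjPart_iff (hf : Antitone f) (hfin : (Function.support f).Finite) (i j : ℕ) :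
    i < conjPart f j ↔ j < f i := by
  constructor
  · intro hi
    by_contra! hfi
    have hsub : {i' | j < f i'} ⊆ Set.Iio i := fun i' hi' => Set.mem_Iio.mpr <| by
      by_contra! hle
      exact (lt_of_lt_of_le hi' (hf hle)).not_ge hfi
    have := Set.ncard_le_ncard hsub (Set.finite_Iio i)
    rw [Set.ncard_Iio_nat] at this
    exact (lt_of_lt_of_le hi this).false
  · intro hfi
    have hsub : Set.Iio (i + 1) ⊆ {i' | j < f i'} := fun i' hi' =>
      lt_of_lt_of_le hfi (hf (Nat.lt_succ_iff.mp hi'))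
    have := Set.ncard_le_ncard hsub (setOf_lt_finite hfin j)
    rwa [Set.ncard_Iio_nat] at this

lemma conjPart_conjPart (hf : Antitone f) (hfin : (Function.support f).Finite) :
    conjPart (conjPart f) = f := by
  funext k
  have hset : {j | k < conjPart f j} = Set.Iio (f k) := by
    ext j
    exact lt_conjPart_iff hf hfin k j
  rw [conjPart, hset, Set.ncard_Iio_nat]

variable {N : ℕ}

lemma conjPart_eq_card_filter (hN : ∀ i, N ≤ i → f i = 0) (j : ℕ) :
    conjPart f j = #{i ∈ range N | j < f i} := by
  have hset : {i | j < f i} = ↑({i ∈ range N | j < f i} : Finset ℕ) := by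
    ext i
    simp only [Set.mem_ofPred_eq, coe_filter, mem_range]
    refine ⟨fun hi => ⟨?_, hi⟩, And.right⟩
    by_contra! hle
    simp [hN i hle] at hi
  rw [conjPart, hset, Set.ncard_coe_finset]

lemma sum_range_conjPart (hN : ∀ i, N ≤ i → f i = 0) (k : ℕ) :
    ∑ j ∈ range k, conjPart f j = ∑ i ∈ range N, min (f i) k := by
  simp_rw [conjPart_eq_card_filter hN, card_filter]
  rw [sum_comm]
  refine sum_congr rfl fun i _ => ?_
  rw [← card_filter, ← card_range (min (f i) k)]
  congr 1
  ext j
  simp only [mem_filter, mem_range, lt_min_iff]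
  tauto

end Conjugate

lemma IsPartitionOf.sum_range_eq {n : ℕ} {f : ℕ → ℕ} (hf : IsPartitionOf n f) {N : ℕ}
    (hN : ∀ i, N ≤ i → f i = 0) : ∑ i ∈ range N, f i = n := by
  rw [← hf.2.2]
  refine (finsum_eq_finsetSum_of_support_subset f fun i hi => ?_).symm
  simp only [coe_range, Set.mem_Iio]
  by_contra! hle
  exact hi (hN i hle)

lemma IsPartitionOf.conjPart {n : ℕ} {f : ℕ → ℕ} (hf : IsPartitionOf n f) :
    IsPartitionOf n (conjPart f) := by
  have hanti := hf.1
  have hfin := hf.2.1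
  have hsupp : Function.support (_root_.conjPart f) ⊆ ↑(range (f 0)) := fun j hj => by
    obtain ⟨i, hi⟩ := Set.nonempty_of_ncard_ne_zero (Function.mem_support.mp hj)
    exact mem_range.mpr (lt_of_lt_of_le hi (hanti (Nat.zero_le i)))
  refine ⟨fun j j' hjj' => ?_, (range (f 0)).finite_toSet.subset hsupp, ?_⟩
  · exact Set.ncard_le_ncard (fun i hi => lt_of_le_of_lt hjj' hi) (setOf_lt_finite hfin j)
  · obtain ⟨N, hN⟩ := exists_forall_ge_eq_zero hfin
    rw [finsum_eq_finsetSum_of_support_subset _ hsupp, sum_range_conjPart hN,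
      ← hf.sum_range_eq hN]
    exact sum_congr rfl fun i _ => min_eq_left (hanti (Nat.zero_le i))

lemma DomLE.antisymm {f g : ℕ → ℕ} (h₁ : DomLE g f) (h₂ : DomLE f g) : g = f := by
  funext k
  have hk := le_antisymm (h₁ k) (h₂ k)
  have hk₁ := le_antisymm (h₁ (k + 1)) (h₂ (k + 1))
  rw [sum_range_succ, sum_range_succ] at hk₁
  omega

/-- The excess of `g` over the level `k` is concentrated on the first `conjPart g k` parts,
where dominance compares it with that of `f`. -/
lemma DomLE.sum_range_tsub_le {f g : ℕ → ℕ} (h : DomLE g f) (hg : Antitone g)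
    (hgfin : (Function.support g).Finite) {N : ℕ} (hN : ∀ i, N ≤ i → g i = 0) (k : ℕ) :
    ∑ i ∈ range N, (g i - k) ≤ ∑ i ∈ range N, (f i - k) := by
  set s := conjPart g k
  have hlt (i : ℕ) : i < s ↔ k < g i := lt_conjPart_iff hg hgfin i k
  have hsN : s ≤ N := by
    by_contra! hNs
    have := (hlt N).mp hNs
    rw [hN N le_rfl] at this
    exact Nat.not_lt_zero k this
  have hexcess_support : ∑ i ∈ range N, (g i - k) = ∑ i ∈ range s, (g i - k) :=
    (sum_subset (range_subset_range.mpr hsN) fun i _ his =>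
      Nat.sub_eq_zero_of_le (not_lt.mp ((hlt i).not.mp (by simpa using his)))).symm
  have hconst : ∑ _i ∈ range s, k = s * k := by simp
  have hexcess : ∑ i ∈ range s, (g i - k) + s * k ≤ ∑ i ∈ range s, (f i - k) + s * k :=
    calc ∑ i ∈ range s, (g i - k) + s * k = ∑ i ∈ range s, g i := by
          rw [← hconst, ← sum_add_distrib]
          exact sum_congr rfl fun i hi => Nat.sub_add_cancel ((hlt i).mp (mem_range.mp hi)).le
      _ ≤ ∑ i ∈ range s, f i := h s
      _ ≤ ∑ i ∈ range s, (f i - k) + s * k := by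
          rw [← hconst, ← sum_add_distrib]
          exact sum_le_sum fun i _ => le_tsub_add
  rw [hexcess_support]
  exact (Nat.le_of_add_le_add_right hexcess).trans
    (sum_le_sum_of_subset (range_subset_range.mpr hsN))

lemma DomLE.conjPart {n : ℕ} {f g : ℕ → ℕ} (hf : IsPartitionOf n f) (hg : IsPartitionOf n g)
    (h : DomLE g f) : DomLE (conjPart f) (conjPart g) := by
  intro k
  obtain ⟨Nf, hNf⟩ := exists_forall_ge_eq_zero hf.2.1
  obtain ⟨Ng, hNg⟩ := exists_forall_ge_eq_zero hg.2.1
  have hNf' i (hi : max Nf Ng ≤ i) : f i = 0 := hNf i (le_of_max_le_left hi)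
  have hNg' i (hi : max Nf Ng ≤ i) : g i = 0 := hNg i (le_of_max_le_right hi)
  have hsplit {p : ℕ → ℕ} (hp : IsPartitionOf n p) (hN : ∀ i, max Nf Ng ≤ i → p i = 0) :
      ∑ i ∈ range (max Nf Ng), min (p i) k + ∑ i ∈ range (max Nf Ng), (p i - k) = n := by
    rw [← sum_add_distrib, ← hp.sum_range_eq hN]
    exact sum_congr rfl fun i _ => by rw [add_comm, tsub_add_min]
  have hexcess := h.sum_range_tsub_le hg.1 hg.2.1 hNg' k
  have hsplit_f := hsplit hf hNf'
  have hsplit_g := hsplit hg hNg'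
  rw [sum_range_conjPart hNf', sum_range_conjPart hNg']
  omega

theorem springer_correspondence_GLn_combinatorial_general
    (n : ℕ)
    (R : Set (ℕ → ℕ)) (hR : ∀ μ ∈ R, IsPartitionOf n μ)
    (Ψ : (ℕ → ℕ) → (ℕ → ℕ)) (hΨ : ∀ μ ∈ R, IsPartitionOf n (Ψ μ))
    (d e : (ℕ → ℕ) → (ℕ → ℕ) → ℕ)
    (he1 : ∀ ν : ℕ → ℕ, IsPartitionOf n ν → e ν ν = 1)
    (he2 : ∀ ν ζ : ℕ → ℕ, IsPartitionOf n ν → IsPartitionOf n ζ →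
      e ν ζ ≠ 0 → DomLE ζ ν)
    (hd1 : ∀ μ ∈ R, d μ μ = 1)
    (hd2 : ∀ lam : ℕ → ℕ, IsPartitionOf n lam → ∀ μ ∈ R, d lam μ ≠ 0 → DomLE lam μ)
    (hde : ∀ lam : ℕ → ℕ, IsPartitionOf n lam → ∀ μ ∈ R,
      d lam μ = e (conjPart lam) (Ψ μ)) :
    ∀ μ ∈ R, Ψ μ = conjPart μ := by
  intro μ hμR
  have hμ := hR μ hμR
  have hΨμ := hΨ μ hμR
  have hΨμ_conj : conjPart (conjPart (Ψ μ)) = Ψ μ := conjPart_conjPart hΨμ.1 hΨμ.2.1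
  have hle : DomLE (Ψ μ) (conjPart μ) :=
    he2 _ _ hμ.conjPart hΨμ (by rw [← hde μ hμ μ hμR, hd1 μ hμR]; exact one_ne_zero)
  have hge : DomLE (conjPart (Ψ μ)) μ :=
    hd2 _ hΨμ.conjPart μ hμR <| by
      rw [hde _ hΨμ.conjPart μ hμR, hΨμ_conj, he1 _ hΨμ]
      exact one_ne_zero
  have hge' := hge.conjPart hμ hΨμ.conjPart
  rw [hΨμ_conj] at hge'
  exact hle.antisymm hge'

/-- **Combinatorial core of the modular Springer correspondence for `GL_n`.**
Let `𝒫` be the partitions of a positive integer `n`, `R ⊆ 𝒫`, `Ψ : R → 𝒫`, and let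
`d : 𝒫 × R → ℕ` and `e : 𝒫 × 𝒫 → ℕ` satisfy:
(i) `e ν ν = 1`; (ii) `e ν ζ ≠ 0 → ζ ⊴ ν`; (iii) `d μ μ = 1` for `μ ∈ R`;
(iv) `d λ μ ≠ 0 → λ ⊴ μ`; (v) `d λ μ = e λ' (Ψ μ)`.
Then `Ψ μ = μ'` for every `μ ∈ R`. -/
theorem springer_correspondence_GLn_combinatorial
    (n : ℕ) (hn : 0 < n)
    (R : Set (ℕ → ℕ)) (hR : ∀ μ ∈ R, IsPartitionOf n μ)
    (Ψ : (ℕ → ℕ) → (ℕ → ℕ)) (hΨ : ∀ μ ∈ R, IsPartitionOf n (Ψ μ))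
    (d e : (ℕ → ℕ) → (ℕ → ℕ) → ℕ)
    (he1 : ∀ ν : ℕ → ℕ, IsPartitionOf n ν → e ν ν = 1)
    (he2 : ∀ ν ζ : ℕ → ℕ, IsPartitionOf n ν → IsPartitionOf n ζ →
      e ν ζ ≠ 0 → DomLE ζ ν)
    (hd1 : ∀ μ ∈ R, d μ μ = 1)
    (hd2 : ∀ lam : ℕ → ℕ, IsPartitionOf n lam → ∀ μ ∈ R, d lam μ ≠ 0 → DomLE lam μ)
    (hde : ∀ lam : ℕ → ℕ, IsPartitionOf n lam → ∀ μ ∈ R,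
      d lam μ = e (conjPart lam) (Ψ μ)) :
    ∀ μ ∈ R, Ψ μ = conjPart μ :=
  springer_correspondence_GLn_combinatorial_general n R hR Ψ hΨ d e he1 he2 hd1 hd2 hde
end

section
/- Let (O, ≤) be a finite partially ordered set. For each o ∈ O let K_o and F_o be finite sets, with K_o partially ordered, and let β_o : F_o → K_o be an injection. Set 𝔓_K = {(o,ρ) : o ∈ O, ρ ∈ K_o} and 𝔓_F = {(o,σ) : o ∈ O, σ ∈ F_o}, and define β_N : 𝔓_F → 𝔓_K by β_N(o,σ) = (o, β_o(σ)). Let d : 𝔓_K × 𝔓_F → ℕ satisfy: (a) d((o, β_o(σ)), (o,σ)) = 1 for all o ∈ O, σ ∈ F_o; (b) if d((o,ρ),(o,σ)) ≠ 0 then β_o(σ) ≤ ρ in K_o; (c) if d((o,ρ),(o',σ)) ≠ 0 then o' ≤ o in O. Let A and B be sets with injections Ψ_K : A → 𝔓_K and Ψ_F : B → 𝔓_F, and suppose (d) for every p ∈ 𝔓_K not in the image of Ψ_K and every q ∈ 𝔓_F in the image of Ψ_F, d(p,q) = 0. Then there exists a unique injection β_S : B → A such that Ψ_K(β_S(b))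 = β_N(Ψ_F(b)) for all b ∈ B; moreover, setting d^W(a,b) = d(Ψ_K(a), Ψ_F(b)), one has d^W(β_S(b), b) = 1 for all b ∈ B, and whenever d^W(a,b) ≠ 0, writing Ψ_K(a) = (x,ρ) and Ψ_F(b) = (y,σ), one has y ≤ x in O, and if y = x then β_y(σ) ≤ ρ in K_x. (This is the Springer basic set theorem: taking d to be the decomposition matrix for G-equivariant perverse sheaves on the nilpotent cone, β_o the triangular basic sets of the component groups A_G(O), and Ψ_K, Ψ_F the ordinary and modular Springer correspondences, it produces a unitriangular basic set for the Weyl group.) -/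
/-- **The Springer basic set theorem (abstract form).**
Let `(O, ≤)` be a finite poset; for each `o ∈ O` let `K o` and `F o` be finite sets with
`K o` partially ordered and `β o : F o → K o` injective.  Let `d : 𝔓_K × 𝔓_F → ℕ`
(where `𝔓_K = Σ o, K o` and `𝔓_F = Σ o, F o`) satisfy the block unitriangularity
conditions (a), (b), (c), let `Ψ_K : A → 𝔓_K` and `Ψ_F : B → 𝔓_F` be injections, and
assume (d): `d p q = 0` whenever `p ∉ im Ψ_K` and `q ∈ im Ψ_F`.  Then there is a unique
injection `β_S : B → A` with `Ψ_K ∘ β_S = β_N ∘ Ψ_F` (where `β_N (o, σ) = (o, β o σ)`);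
moreover `d^W (β_S b) b = 1` and `d^W a b ≠ 0` forces `(Ψ_F b).1 ≤ (Ψ_K a).1`, with
`β (Ψ_F b).2 ≤ (Ψ_K a).2` in case of equality. -/
theorem springer_basic_set
    (O : Type*) [Fintype O] [PartialOrder O]
    (K F : O → Type*) [∀ o, Fintype (K o)] [∀ o, Fintype (F o)]
    [∀ o, PartialOrder (K o)]
    (β : ∀ o, F o → K o) (hβ : ∀ o, Function.Injective (β o))
    (d : (Σ o, K o) → (Σ o, F o) → ℕ)
    (ha : ∀ (o : O) (σ : F o), d ⟨o, β o σ⟩ ⟨o, σ⟩ = 1)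
    (hb : ∀ (o : O) (ρ : K o) (σ : F o), d ⟨o, ρ⟩ ⟨o, σ⟩ ≠ 0 → β o σ ≤ ρ)
    (hc : ∀ (o o' : O) (ρ : K o) (σ : F o'), d ⟨o, ρ⟩ ⟨o', σ⟩ ≠ 0 → o' ≤ o)
    (A B : Type*) (ΨK : A → Σ o, K o) (ΨF : B → Σ o, F o)
    (hΨK : Function.Injective ΨK) (hΨF : Function.Injective ΨF)
    (hd : ∀ p : Σ o, K o, p ∉ Set.range ΨK → ∀ q ∈ Set.range ΨF, d p q = 0) :
    (∃! βS : B → A, Function.Injective βS ∧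
        ∀ b : B, ΨK (βS b) = ⟨(ΨF b).1, β (ΨF b).1 (ΨF b).2⟩) ∧
    (∀ βS : B → A, (∀ b : B, ΨK (βS b) = ⟨(ΨF b).1, β (ΨF b).1 (ΨF b).2⟩) →
      (∀ b : B, d (ΨK (βS b)) (ΨF b) = 1) ∧
      (∀ (a : A) (b : B), d (ΨK a) (ΨF b) ≠ 0 →
        (ΨF b).1 ≤ (ΨK a).1 ∧
        ∀ h : (ΨF b).1 = (ΨK a).1,
          cast (congrArg K h) (β (ΨF b).1 (ΨF b).2) ≤ (ΨK a).2)) := by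
  have key : ∀ b : B, (⟨(ΨF b).1, β (ΨF b).1 (ΨF b).2⟩ : Σ o, K o) ∈ Set.range ΨK := by
    intro b
    by_contra hnot
    have := hd _ hnot (ΨF b) ⟨b, rfl⟩
    obtain ⟨o, σ⟩ := ΨF b
    simp [ha] at this
  choose βS hβS using fun b => key b
  refine ⟨⟨βS, ⟨?_, fun b => (hβS b)⟩, ?_⟩, ?_⟩
  · intro b b' h
    apply hΨF
    have this1 := (hβS b).symm.trans ((congrArg ΨK h).trans (hβS b'))
    obtain ⟨p, hp⟩ : ∃ p, ΨF b = p := ⟨_, rfl⟩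
    obtain ⟨q, hq⟩ : ∃ q, ΨF b' = q := ⟨_, rfl⟩
    rw [hp, hq] at this1 ⊢
    obtain ⟨o, σ⟩ := p
    obtain ⟨o', σ'⟩ := q
    obtain ⟨rfl, h2⟩ := Sigma.mk.inj_iff.mp this1
    simp only [heq_eq_eq] at h2
    exact Sigma.mk.inj_iff.mpr ⟨rfl, heq_of_eq (hβ _ h2)⟩
  · rintro g ⟨hg1, hg2⟩
    funext b
    exact hΨK ((hg2 b).trans (hβS b).symm)
  · intro f hf
    constructor
    · intro b
      rw [hf b]
      obtain ⟨o, σ⟩ := ΨF b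
      exact ha o σ
    · intro a b hne
      obtain ⟨p, hp⟩ : ∃ p, ΨK a = p := ⟨_, rfl⟩
      obtain ⟨q, hq⟩ : ∃ q, ΨF b = q := ⟨_, rfl⟩
      rw [hp, hq] at hne ⊢
      obtain ⟨x, ρ⟩ := p
      obtain ⟨y, σ⟩ := q
      refine ⟨hc _ _ _ _ hne, ?_⟩
      dsimp only
      rintro rfl
      exact hb _ _ _ hne
end

section
/- Let k be a field, V a k-vector space, J a finite index set, and (b_j)_{j∈J} a linearly independent family in V. Let m be a natural number, d : Fin m → J → k a matrix of coefficients, and define rows r : Fin m → V by r_i = Σ_{j∈J} d(i,j)·b_j. Suppose β : J → Fin m is injective and satisfies d(β(j), j) = 1 for all j ∈ J, and d(i,j) = 0 whenever i < β(j). Then for every i ∈ Fin m, the vector r_i lies in the linear span of {r_{i'} : i' < i} if and only if i is not in the image of β. (This justifies the method of computing a unitriangular basic set from the character table: ordering the rows of the decomposition matrix compatibly, the basic set consists exactly of the rows at which the rank of the span of the rows so far increases.) -/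
/-- **Basic sets from unitriangular matrices of rows.**
Let `(b j)_{j ∈ J}` be a finite linearly independent family in a `k`-vector space `V`, and
let `r i = ∑ j, d i j • b j` for a matrix `d : Fin m → J → k`.  Suppose `β : J → Fin m` is
injective, `d (β j) j = 1`, and `d i j = 0` whenever `i < β j` (the topmost nonzero entry of
column `j` is a `1` in row `β j`).  Then for every row index `i`, the row `r i` lies in the
span of the strictly earlier rows if and only if `i` is not in the image of `β`. -/
theorem row_in_span_of_earlier_iff_not_basic
    (k : Type*) [Field k] (V : Type*) [AddCommGroup V] [Module k V]
    (J : Type*) [Fintype J] (b : J → V) (hb : LinearIndependent k b)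
    (m : ℕ) (d : Fin m → J → k)
    (r : Fin m → V) (hr : ∀ i : Fin m, r i = ∑ j : J, d i j • b j)
    (β : J → Fin m) (hβ : Function.Injective β)
    (hdiag : ∀ j : J, d (β j) j = 1)
    (htop : ∀ (i : Fin m) (j : J), i < β j → d i j = 0) :
    ∀ i : Fin m,
      r i ∈ Submodule.span k (r '' {i' : Fin m | i' < i}) ↔ i ∉ Set.range β := by
  classical
  have key : ∀ n : ℕ, ∀ j : J, (β j : ℕ) < n →
      b j ∈ Submodule.span k (r '' {i' : Fin m | (i' : ℕ) < n}) := by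
    intro n
    induction n with
    | zero => intro j hj; omega
    | succ n ih =>
      intro j hj
      have hbj : b j = r (β j) - ∑ j' ∈ Finset.univ.erase j, d (β j) j' • b j' := by
        rw [hr, ← Finset.add_sum_erase _ _ (Finset.mem_univ j), hdiag, one_smul]
        abel
      rw [hbj]
      refine sub_mem (Submodule.subset_span ⟨β j, hj, rfl⟩) (Submodule.sum_mem _ ?_)
      intro j' hj'
      rcases eq_or_ne (d (β j) j') 0 with h0 | h0
      · rw [h0, zero_smul]; exact zero_mem _
      · have hle : β j' ≤ β j := not_lt.mp fun h => h0 (htop _ _ h)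
        have hne : β j' ≠ β j := fun h => (Finset.mem_erase.mp hj').1 (hβ h)
        have hlt : (β j' : ℕ) < (β j : ℕ) := Fin.lt_def.mp (lt_of_le_of_ne hle hne)
        have : (β j' : ℕ) < n := by omega
        refine Submodule.smul_mem _ _ ?_
        refine Submodule.span_mono (Set.image_mono ?_) (ih j' this)
        intro x hx
        exact Nat.lt_succ_of_lt hx
  intro i
  have hspan : Submodule.span k (r '' {i' : Fin m | i' < i}) =
      Submodule.span k (b '' {j : J | β j < i}) := by
    apply le_antisymm
    · rw [Submodule.span_le]
      rintro _ ⟨i', hi', rfl⟩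
      rw [hr]
      refine Submodule.sum_mem _ ?_
      intro j _
      rcases eq_or_ne (d i' j) 0 with h0 | h0
      · rw [h0, zero_smul]; exact zero_mem _
      · have hle : β j ≤ i' := not_lt.mp fun h => h0 (htop _ _ h)
        exact Submodule.smul_mem _ _
          (Submodule.subset_span ⟨j, lt_of_le_of_lt hle hi', rfl⟩)
    · rw [Submodule.span_le]
      rintro _ ⟨j, hj, rfl⟩
      exact key i.val j hj
  rw [hspan]
  constructor
  · rintro hmem ⟨j₀, rfl⟩
    have hw : r (β j₀) - b j₀ ∈ Submodule.span k (b '' {j : J | β j < β j₀}) := by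
      rw [hr, ← Finset.add_sum_erase _ _ (Finset.mem_univ j₀), hdiag, one_smul,
        add_sub_cancel_left]
      refine Submodule.sum_mem _ ?_
      intro j' hj'
      rcases eq_or_ne (d (β j₀) j') 0 with h0 | h0
      · rw [h0, zero_smul]; exact zero_mem _
      · have hle : β j' ≤ β j₀ := not_lt.mp fun h => h0 (htop _ _ h)
        have hne : β j' ≠ β j₀ := fun h => (Finset.mem_erase.mp hj').1 (hβ h)
        exact Submodule.smul_mem _ _
          (Submodule.subset_span ⟨j', lt_of_le_of_ne hle hne, rfl⟩)
    have hbmem : b j₀ ∈ Submodule.span k (b '' {j : J | β j < β j₀}) := by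
      have := sub_mem hmem hw
      simpa using this
    exact hb.notMem_span_image (by simp) hbmem
  · intro hnr
    rw [hr]
    refine Submodule.sum_mem _ ?_
    intro j _
    rcases eq_or_ne (d i j) 0 with h0 | h0
    · rw [h0, zero_smul]; exact zero_mem _
    · have hle : β j ≤ i := not_lt.mp fun h => h0 (htop _ _ h)
      have hne : β j ≠ i := fun h => hnr ⟨j, h⟩
      exact Submodule.smul_mem _ _
        (Submodule.subset_span ⟨j, lt_of_le_of_ne hle hne, rfl⟩)
end
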